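/- arXiv:2504.21551 — 3 statements merged into one kernel-verified Lean document; each statement's English description precedes it below -/
import Mathlib

section
/- Let n ∈ ℕ and let A ⊆ ℝⁿ be a nonempty subset closed under the average operation x ⊕ y = (x+y)/2, endowed with the subspace Euclidean topology. Then (A, ⊕) is a midpoint-convex body in the category of topological spaces if and only if A is a bounded convex subset of ℝⁿ. -/
/-- A midpoint operation: idempotent, commutative, satisfying transposition. -/
def IsMidpoint {A : Type} (m : A → A → A) : Prop :=
  (∀ x, m x x = x) ∧ (∀ x y, m x y = m y x) ∧
    (∀ x y z w, m (m x y) (m z w) = m (m x z) (m y w))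

/-- Cancellation: `m x y = m x z` implies `y = z`. -/
def Cancellative {A : Type} (m : A → A → A) : Prop :=
  ∀ x y z, m x y = m x z → y = z

/-- Iterativity in the category of topological spaces. -/
def TopIterative {A : Type} [TopologicalSpace A] (m : A → A → A) : Prop :=
  ∀ (X : Type) [TopologicalSpace X], ∀ c : X → A × X, Continuous c →
    ∃! u : X → A, Continuous u ∧ ∀ x, u x = m (c x).1 (u (c x).2)

/-!
Iterativity applied to the shift `s ↦ (s 0, fun i => s (i + 1))` on `ℕ → A` gives a continuous
`M` with `M s = midpoint (s 0) (M (fun i => s (i + 1)))`, so `M s` differs from the partial dyadic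
sum `∑ k < m, 2⁻¹ ^ (k + 1) • s k` by `2⁻¹ ^ m • M (fun i => s (i + m))`. Changing a constant
sequence in one far-out entry therefore moves `M` by a tiny multiple of the change, and continuity
forces `A` to be bounded; then `M s` is the whole dyadic series, and feeding in the binary digits of
`t` produces the point of `[x, y]` with parameter `t`. Conversely, for bounded convex `A` the unique
solution is the dyadic series along the orbit; it stays in `A` because in finite dimensions a
positive infinite convex combination lies in the relative interior of the convex hull of its points.
-/

open Set Filter Topology

section SigmaConvex

variable {E : Type*} [AddCommGroup E] [Module ℝ E] [TopologicalSpace E] [ContinuousSMul ℝ E]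

theorem Convex.mem_closure_of_hasSum {C : Set E} (hC : Convex ℝ C) {a : ℕ → E} (ha : ∀ k, a k ∈ C)
    {l : ℕ → ℝ} (hl₀ : ∀ k, 0 ≤ l k) (hl : HasSum l 1) {z : E}
    (hz : HasSum (fun k => l k • a k) z) : z ∈ closure C := by
  have hσ := hl.tendsto_sum_nat
  have hcenter : Tendsto (fun m => (Finset.range m).centerMass l a) atTop (𝓝 z) := by
    simpa [Finset.centerMass] using (hσ.inv₀ one_ne_zero).smul hz.tendsto_sum_nat
  refine mem_closure_of_tendsto hcenter ?_
  filter_upwards [hσ.eventually (lt_mem_nhds one_pos)] with m hm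
  exact hC.centerMass_mem (fun k _ => hl₀ k) hm fun k _ => ha k

theorem mem_interior_convexHull_of_hasSum [IsTopologicalAddGroup E] {a : ℕ → E}
    (hint : (interior (convexHull ℝ (range a))).Nonempty) {l : ℕ → ℝ} (hl₀ : ∀ k, 0 < l k)
    (hl : HasSum l 1) {z : E} (hz : HasSum (fun k => l k • a k) z) :
    z ∈ interior (convexHull ℝ (range a)) := by
  obtain ⟨p, hp⟩ := hint
  obtain ⟨s, μ, -, hμ₁, hpμ⟩ :=
    (convexHull_range_eq_exists_affineCombination (R := ℝ) a).subset (interior_subset hp)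
  rw [Finset.affineCombination_eq_linear_combination s a μ hμ₁] at hpμ
  set μ' : ℕ → ℝ := fun i => if i ∈ s then μ i else 0
  have hμ'a : HasSum (fun k => μ' k • a k) p := by
    have h : HasSum (fun k => μ' k • a k) (∑ i ∈ s, μ' i • a i) :=
      hasSum_sum_of_ne_finset_zero fun i hi => by simp [μ', hi]
    rwa [Finset.sum_congr rfl fun i hi => show μ' i • a i = μ i • a i by simp [μ', hi], hpμ] at h
  have hμ' : HasSum μ' 1 := by
    have h : HasSum μ' (∑ i ∈ s, μ' i) := hasSum_sum_of_ne_finset_zero fun i hi => by simp [μ', hi]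
    rwa [Finset.sum_congr rfl fun i hi => show μ' i = μ i from if_pos hi, hμ₁] at h
  -- `z = ε • p + (1 - ε) • v`, where for small `ε` the point `v` is again a nonnegative infinite
  -- combination of the `a k`
  obtain ⟨ε, hε, hε₁, hεμ⟩ : ∃ ε : ℝ, 0 < ε ∧ ε < 1 ∧ ∀ i ∈ s, ε * μ i < l i := by
    have hsmall : ∀ᶠ ε in 𝓝 (0 : ℝ), ε < 1 ∧ ∀ i ∈ s, ε * μ i < l i := by
      refine (gt_mem_nhds one_pos).and ((Finset.eventually_all s).2 fun i _ => ?_)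
      exact (continuous_id.mul continuous_const).continuousAt.eventually_lt continuousAt_const
        (by simpa using hl₀ i)
    obtain ⟨ε, ⟨h1, h2⟩, hε⟩ := ((hsmall.filter_mono nhdsWithin_le_nhds).and
      (eventually_mem_nhdsWithin (s := Ioi 0))).exists
    exact ⟨ε, hε, h1, h2⟩
  set v := (1 - ε)⁻¹ • (z - ε • p)
  have hv : v ∈ closure (convexHull ℝ (range a)) := by
    refine (convex_convexHull ℝ _).mem_closure_of_hasSum
      (l := fun k => (1 - ε)⁻¹ * (l k - ε * μ' k))
      (fun k => subset_convexHull ℝ _ (mem_range_self k)) (fun k => ?_) ?_ ?_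
    · refine mul_nonneg (inv_nonneg.2 (by linarith)) (sub_nonneg.2 ?_)
      by_cases hk : k ∈ s
      · simpa [μ', hk] using (hεμ k hk).le
      · simpa [μ', hk] using (hl₀ k).le
    · have h := (hl.sub (hμ'.mul_left ε)).mul_left (1 - ε)⁻¹
      rwa [mul_one, inv_mul_cancel₀ (sub_ne_zero.2 hε₁.ne')] at h
    · convert (hz.sub (hμ'a.const_smul ε)).const_smul (1 - ε)⁻¹ using 1
      ext k
      simp only [mul_smul, sub_smul, smul_sub]
  have hz_eq : z = ε • p + (1 - ε) • v := by
    simp only [v, smul_inv_smul₀ (sub_ne_zero.2 hε₁.ne')]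
    abel
  rw [hz_eq]
  exact (convex_convexHull ℝ _).combo_interior_closure_mem_interior hp hv hε (by linarith)
    (by ring)

end SigmaConvex

theorem Convex.mem_of_hasSum {E : Type*} [NormedAddCommGroup E] [NormedSpace ℝ E]
    [FiniteDimensional ℝ E] {A : Set E} (hA : Convex ℝ A) {a : ℕ → E} (ha : ∀ k, a k ∈ A)
    {l : ℕ → ℝ} (hl₀ : ∀ k, 0 < l k) (hl : HasSum l 1) {z : E}
    (hz : HasSum (fun k => l k • a k) z) : z ∈ A := by
  induction hd : Module.finrank ℝ E using Nat.strong_induction_on generalizing E with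
  | _ d ih =>
  by_cases hint : (interior (convexHull ℝ (range a))).Nonempty
  · exact convexHull_min (range_subset_iff.2 ha) hA
      (interior_subset (mem_interior_convexHull_of_hasSum hint hl₀ hl hz))
  -- otherwise translate by `a 0` into the proper subspace `V` and use induction
  set V := vectorSpan ℝ (range a)
  have hV : V ≠ ⊤ := fun h => hint <| interior_convexHull_nonempty_iff_affineSpan_eq_top.2 <|
    (AffineSubspace.direction_eq_top_iff_of_nonempty
      ((affineSpan_nonempty ℝ).2 (range_nonempty a))).1 (by rwa [direction_affineSpan])
  have hmem : ∀ k, a k - a 0 ∈ V := fun k =>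
    vsub_mem_vectorSpan ℝ (mem_range_self k) (mem_range_self 0)
  have hz' : HasSum (fun k => l k • (a k - a 0)) (z - a 0) := by
    simpa [smul_sub] using hz.sub (hl.smul_const (a 0))
  have hzV : z - a 0 ∈ V := V.closed_of_finiteDimensional.mem_of_tendsto hz'.tendsto_sum_nat
    (Eventually.of_forall fun m => V.sum_mem fun k _ => V.smul_mem _ (hmem k))
  have hsumV : HasSum (fun k => l k • (⟨a k - a 0, hmem k⟩ : V)) ⟨z - a 0, hzV⟩ :=
    (Topology.IsInducing.subtypeVal.hasSum_iff (g := V.subtype) _ _).1 hz'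
  simpa using ih _ (hd ▸ Submodule.finrank_lt hV)
    ((hA.translate_preimage_right (a 0)).linear_preimage V.subtype)
    (fun k => by simpa using ha k) hsumV rfl

theorem hasSum_inv_two_pow_succ : HasSum (fun k : ℕ => (2⁻¹ : ℝ) ^ (k + 1)) 1 := by
  simpa [pow_succ, div_eq_mul_inv, mul_comm] using hasSum_geometric_two' 1

theorem Function.iterate_shift_apply {α : Type*} (s : ℕ → α) (k i : ℕ) :
    (fun s : ℕ → α => fun i => s (i + 1))^[k] s i = s (i + k) := by
  induction k generalizing i with
  | zero => rfl
  | succ k ih => rw [Function.iterate_succ_apply', ih, add_right_comm, add_assoc]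

section Midpoint

variable {X E : Type*} [NormedAddCommGroup E] [NormedSpace ℝ E]

theorem eq_sum_add_of_eq_midpoint {a : X → E} {g : X → X} {u : X → E}
    (hfix : ∀ x, u x = midpoint ℝ (a x) (u (g x))) (m : ℕ) (x : X) :
    u x = ∑ k ∈ Finset.range m, (2⁻¹ : ℝ) ^ (k + 1) • a (g^[k] x)
      + (2⁻¹ : ℝ) ^ m • u (g^[m] x) := by
  induction m generalizing x with
  | zero => simp
  | succ m ih =>
    have hshift : ∑ k ∈ Finset.range m, (2⁻¹ : ℝ) ^ (k + 1 + 1) • a (g^[k + 1] x)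
        = (2⁻¹ : ℝ) • ∑ k ∈ Finset.range m, (2⁻¹ : ℝ) ^ (k + 1) • a (g^[k] (g x)) := by
      rw [Finset.smul_sum]
      refine Finset.sum_congr rfl fun k _ => ?_
      rw [Function.iterate_succ_apply, smul_smul, ← pow_succ']
    rw [Finset.sum_range_succ', hshift, Function.iterate_succ_apply, Function.iterate_zero_apply,
      hfix x, ih (g x), midpoint_eq_smul_add, invOf_eq_inv]
    module

theorem hasSum_of_eq_midpoint {a : X → E} {g : X → X} {u : X → E} {R : ℝ} (hu : ∀ x, ‖u x‖ ≤ R)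
    (hfix : ∀ x, u x = midpoint ℝ (a x) (u (g x))) (x : X) :
    HasSum (fun k => (2⁻¹ : ℝ) ^ (k + 1) • a (g^[k] x)) (u x) := by
  have ha : ∀ y, ‖a y‖ ≤ 3 * R := fun y => by
    have hay : a y = (2 : ℝ) • u y - u (g y) := by
      rw [hfix y, midpoint_eq_smul_add, invOf_eq_inv]
      module
    calc ‖a y‖ ≤ ‖(2 : ℝ) • u y‖ + ‖u (g y)‖ := hay ▸ norm_sub_le _ _
      _ ≤ 3 * R := by rw [norm_smul, Real.norm_two]; linarith [hu y, hu (g y)]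
  have hsummable : Summable fun k => ‖(2⁻¹ : ℝ) ^ (k + 1) • a (g^[k] x)‖ :=
    (hasSum_inv_two_pow_succ.summable.mul_right (3 * R)).of_nonneg_of_le (fun _ => norm_nonneg _)
      fun k => by
        rw [norm_smul, norm_pow, norm_inv, Real.norm_two]
        exact mul_le_mul_of_nonneg_left (ha _) (by positivity)
  refine (hasSum_iff_tendsto_nat_of_summable_norm hsummable).2 ?_
  have hrem : Tendsto (fun m => (2⁻¹ : ℝ) ^ m • u (g^[m] x)) atTop (𝓝 0) := by
    have hgeom : Tendsto (fun m => (2⁻¹ : ℝ) ^ m * R) atTop (𝓝 0) := by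
      simpa using (tendsto_pow_atTop_nhds_zero_of_lt_one (by norm_num : (0 : ℝ) ≤ 2⁻¹)
        (by norm_num)).mul_const R
    refine squeeze_zero_norm (fun m => ?_) hgeom
    rw [norm_smul, norm_pow, norm_inv, Real.norm_two]
    exact mul_le_mul_of_nonneg_left (hu _) (by positivity)
  have hlim := (tendsto_const_nhds (x := u x)).sub hrem
  rw [sub_zero] at hlim
  exact hlim.congr fun m => sub_eq_iff_eq_add.2 (eq_sum_add_of_eq_midpoint hfix m x)

end Midpoint

section InfiniteMidpoint

variable {E : Type*} [NormedAddCommGroup E] [NormedSpace ℝ E] {A : Set E} {M : (ℕ → A) → A}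

theorem hasSum_of_eq_midpoint_shift (hA : Bornology.IsBounded A)
    (hM : ∀ s, (M s : E) = midpoint ℝ (s 0 : E) (M fun i => s (i + 1))) (s : ℕ → A) :
    HasSum (fun k => (2⁻¹ : ℝ) ^ (k + 1) • (s k : E)) (M s) := by
  obtain ⟨R, hR⟩ := isBounded_iff_forall_norm_le.1 hA
  simpa [Function.iterate_shift_apply] using
    hasSum_of_eq_midpoint (a := fun s => (s 0 : E)) (u := fun s => (M s : E))
      (fun s => hR _ (M s).2) hM s

theorem isBounded_of_continuous_of_eq_midpoint_shift (hMc : Continuous M)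
    (hM : ∀ s, (M s : E) = midpoint ℝ (s 0 : E) (M fun i => s (i + 1))) :
    Bornology.IsBounded A := by
  rcases A.eq_empty_or_nonempty with rfl | ⟨p, hp⟩
  · exact Bornology.isBounded_empty
  set c : ℕ → A := fun _ => ⟨p, hp⟩
  have hc : (M c : E) = p := ((midpoint_eq_right_iff ℝ).1 (hM c).symm).symm
  have hupdate : ∀ k (q : A),
      (M (Function.update c k q) : E) - p = (2⁻¹ : ℝ) ^ (k + 1) • (q - p) := by
    intro k q
    induction k with
    | zero =>
      have hshift : (fun i => Function.update c 0 q (i + 1)) = c := by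
        funext i; simp [c]
      rw [hM, hshift, hc, Function.update_self, midpoint_sub_right, invOf_eq_inv, pow_one]
    | succ k ih =>
      have hshift : (fun i => Function.update c (k + 1) q (i + 1)) = Function.update c k q := by
        funext i; simp [c, Function.update_apply]
      rw [hM, hshift, Function.update_of_ne (Nat.succ_ne_zero k).symm, midpoint_sub_left,
        invOf_eq_inv, ih, smul_smul, ← pow_succ']
  refine (Metric.isBounded_iff_subset_closedBall p).2 ?_
  by_contra! hunb
  choose q hqA hq using fun k : ℕ => not_subset.1 (hunb (2 ^ (k + 1)))
  have hconv : Tendsto (fun k => Function.update c k ⟨q k, hqA k⟩) atTop (𝓝 c) :=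
    tendsto_pi_nhds.2 fun i => tendsto_const_nhds.congr'
      ((eventually_gt_atTop i).mono fun k hk => (Function.update_of_ne hk.ne _ _).symm)
  obtain ⟨k, hk⟩ := (Metric.tendsto_nhds.1 ((hMc.tendsto c).comp hconv) 1 one_pos).exists
  have hfar : 2 ^ (k + 1) < ‖q k - p‖ := by simpa [Metric.mem_closedBall, dist_eq_norm] using hq k
  rw [Function.comp_apply, Subtype.dist_eq, dist_eq_norm, hc, hupdate, norm_smul, norm_pow,
    norm_inv, Real.norm_two, inv_pow] at hk
  rw [inv_mul_lt_one₀ (by positivity)] at hk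
  linarith

theorem convex_of_isBounded_of_eq_midpoint_shift (hA : Bornology.IsBounded A)
    (hM : ∀ s, (M s : E) = midpoint ℝ (s 0 : E) (M fun i => s (i + 1))) : Convex ℝ A := by
  intro x hx y hy α β _ hβ hαβ
  obtain ⟨d, -, hd⟩ := Real.ofDigits_SurjOn (b := 2) one_lt_two ⟨hβ, by linarith⟩
  set s : ℕ → A := fun k => if d k = 0 then ⟨x, hx⟩ else ⟨y, hy⟩
  have hs : ∀ k, (2⁻¹ : ℝ) ^ (k + 1) • (s k : E)
      = (2⁻¹ : ℝ) ^ (k + 1) • x + Real.ofDigitsTerm d k • (y - x) := by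
    intro k
    simp only [s, Real.ofDigitsTerm]
    generalize d k = j
    fin_cases j <;> simp [smul_sub]
  have hsum : HasSum (fun k => (2⁻¹ : ℝ) ^ (k + 1) • (s k : E)) (x + β • (y - x)) := by
    have hβsum : HasSum (Real.ofDigitsTerm d) β := hd ▸ Real.summable_ofDigitsTerm.hasSum
    simp only [hs]
    simpa using (hasSum_inv_two_pow_succ.smul_const x).add (hβsum.smul_const (y - x))
  obtain rfl : α = 1 - β := by linarith
  convert (M s).2 using 1
  rw [(hasSum_of_eq_midpoint_shift hA hM s).unique hsum]
  module

end InfiniteMidpoint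

section SubtypeMidpoint

variable {E : Type} [NormedAddCommGroup E] [NormedSpace ℝ E] {A : Set E} {mA : A → A → A}

theorem continuous_of_coe_eq_midpoint (hm : ∀ x y : A, (mA x y : E) = midpoint ℝ x.1 y.1) :
    Continuous fun p : A × A => mA p.1 p.2 := by
  refine Topology.IsInducing.subtypeVal.continuous_iff.2 ?_
  simp only [Function.comp_def, hm, midpoint_eq_smul_add]
  fun_prop

theorem isMidpoint_of_coe_eq_midpoint (hm : ∀ x y : A, (mA x y : E) = midpoint ℝ x.1 y.1) :
    IsMidpoint mA := by
  refine ⟨fun x => Subtype.ext ?_, fun x y => Subtype.ext ?_, fun x y z w => Subtype.ext ?_⟩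
  · rw [hm, midpoint_self]
  · rw [hm, hm, midpoint_comm]
  · simp only [hm, midpoint_eq_smul_add]
    module

theorem cancellative_of_coe_eq_midpoint (hm : ∀ x y : A, (mA x y : E) = midpoint ℝ x.1 y.1) :
    Cancellative mA := fun x y z h => by
  have h' := congrArg Subtype.val h
  rw [hm, hm, midpoint_eq_midpoint_iff_vsub_eq_vsub, vsub_self, eq_comm, vsub_eq_zero_iff_eq] at h'
  exact (Subtype.ext h').symm

theorem isBounded_and_convex_of_topIterative
    (hm : ∀ x y : A, (mA x y : E) = midpoint ℝ x.1 y.1) (hiter : TopIterative mA) :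
    Bornology.IsBounded A ∧ Convex ℝ A := by
  obtain ⟨M, ⟨hMc, hM⟩, -⟩ := hiter (ℕ → A) (fun s => (s 0, fun i => s (i + 1))) (by fun_prop)
  have hM' : ∀ s, (M s : E) = midpoint ℝ (s 0 : E) (M fun i => s (i + 1)) := fun s =>
    (congrArg Subtype.val (hM s)).trans (hm _ _)
  have hA := isBounded_of_continuous_of_eq_midpoint_shift hMc hM'
  exact ⟨hA, convex_of_isBounded_of_eq_midpoint_shift hA hM'⟩

theorem topIterative_of_isBounded_of_convex [FiniteDimensional ℝ E]
    (hm : ∀ x y : A, (mA x y : E) = midpoint ℝ x.1 y.1) (hA : Bornology.IsBounded A)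
    (hconv : Convex ℝ A) : TopIterative mA := by
  obtain ⟨R, hR⟩ := isBounded_iff_forall_norm_le.1 hA
  intro X _ c hc
  set g : X → X := fun x => (c x).2
  set term : ℕ → X → E := fun k x => (2⁻¹ : ℝ) ^ (k + 1) • ((c (g^[k] x)).1 : E)
  have hterm : ∀ k x, ‖term k x‖ ≤ (2⁻¹ : ℝ) ^ (k + 1) * R := fun k x => by
    rw [norm_smul, norm_pow, norm_inv, Real.norm_two]
    exact mul_le_mul_of_nonneg_left (hR _ (c _).1.2) (by positivity)
  have hsummable := hasSum_inv_two_pow_succ.summable.mul_right R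
  have hsum : ∀ x, HasSum (fun k => term k x) (∑' k, term k x) := fun x =>
    (hsummable.of_norm_bounded (hterm · x)).hasSum
  have hmem : ∀ x, ∑' k, term k x ∈ A := fun x =>
    hconv.mem_of_hasSum (fun k => (c _).1.2) (fun k => by positivity) hasSum_inv_two_pow_succ
      (hsum x)
  have hcont : Continuous fun x => ∑' k, term k x := by
    refine continuous_tsum (fun k => ?_) hsummable hterm
    have := hc.comp ((continuous_snd.comp hc).iterate k)
    fun_prop
  refine ⟨fun x => ⟨_, hmem x⟩, ⟨hcont.subtype_mk _, fun x => Subtype.ext ?_⟩, ?_⟩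
  · have hshift : ∀ k, term (k + 1) x = (2⁻¹ : ℝ) • term k (g x) := fun k => by
      simp only [term, Function.iterate_succ_apply, smul_smul, ← pow_succ']
    rw [hm]
    change ∑' k, term k x = midpoint ℝ ((c x).1 : E) (∑' k, term k (g x))
    rw [(hsum x).summable.tsum_eq_zero_add]
    simp only [hshift, tsum_const_smul'', midpoint_eq_smul_add, invOf_eq_inv, smul_add]
    simp [term, g]
  · rintro v ⟨-, hv⟩
    funext x
    exact Subtype.ext ((hasSum_of_eq_midpoint (fun x => hR _ (v x).2)
      (fun x => (congrArg Subtype.val (hv x)).trans (hm _ _)) x).unique (hsum x))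

end SubtypeMidpoint

theorem mconvex_body_in_Top_iff_bounded_convex_general (n : ℕ) (A : Set (Fin n → ℝ)) :
    ∀ mA : A → A → A, (∀ x y : A, (mA x y : Fin n → ℝ) = midpoint ℝ x.1 y.1) →
      (((Continuous fun p : A × A => mA p.1 p.2) ∧ IsMidpoint mA ∧
          Cancellative mA ∧ TopIterative mA) ↔
        (Bornology.IsBounded A ∧ Convex ℝ A)) := by
  intro mA hm
  exact ⟨fun h => isBounded_and_convex_of_topIterative hm h.2.2.2, fun ⟨hA, hconv⟩ =>
    ⟨continuous_of_coe_eq_midpoint hm, isMidpoint_of_coe_eq_midpoint hm,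
      cancellative_of_coe_eq_midpoint hm, topIterative_of_isBounded_of_convex hm hA hconv⟩⟩

/-- A nonempty subset `A ⊆ ℝⁿ` closed under averages, with the subspace
Euclidean topology and the average as midpoint operation, is a
midpoint-convex body in the category of topological spaces if and only if
`A` is bounded and convex. -/
theorem mconvex_body_in_Top_iff_bounded_convex (n : ℕ) (A : Set (Fin n → ℝ))
    (hne : A.Nonempty)
    (hcl : ∀ x ∈ A, ∀ y ∈ A, midpoint ℝ x y ∈ A) :
    ∀ mA : A → A → A, (∀ x y : A, (mA x y : Fin n → ℝ) = midpoint ℝ x.1 y.1) →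
      (((Continuous fun p : A × A => mA p.1 p.2) ∧ IsMidpoint mA ∧
          Cancellative mA ∧ TopIterative mA) ↔
        (Bornology.IsBounded A ∧ Convex ℝ A)) :=
  mconvex_body_in_Top_iff_bounded_convex_general n A
end

section
/- (Pataraia's fixed-point theorem) Let X be a nonempty directed-complete partial order, i.e. a nonempty poset in which every nonempty directed subset has a least upper bound. Then every function f : X → X that is monotone (x ≤ y implies f x ≤ f y) and inflationary (x ≤ f x for all x) has a fixed point. -/
/-! Every chain is directed, so directed completeness bounds all nonempty chains and Zorn's lemma
yields a maximal element `m`. Since `m ≤ f m`, maximality forces `f m = m`. -/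

theorem exists_isMax_of_forall_directedOn_exists_isLUB {α : Type*} [Preorder α] [Nonempty α]
    (hdc : ∀ D : Set α, D.Nonempty → DirectedOn (· ≤ ·) D → ∃ s, IsLUB D s) :
    ∃ m : α, IsMax m :=
  zorn_le_nonempty fun c hc hne =>
    let ⟨s, hs⟩ := hdc c hne hc.directedOn
    ⟨s, hs.1⟩

theorem pataraia_fixed_point_general (X : Type*) [PartialOrder X] [Nonempty X]
    (hdc : ∀ D : Set X, D.Nonempty → DirectedOn (· ≤ ·) D → ∃ s, IsLUB D s)
    (f : X → X) (hinfl : ∀ x, x ≤ f x) :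
    ∃ x, f x = x := by
  obtain ⟨m, hm⟩ := exists_isMax_of_forall_directedOn_exists_isLUB hdc
  exact ⟨m, (hm.eq_of_le (hinfl m)).symm⟩

/-- Pataraia's fixed-point theorem: on a nonempty directed-complete partial
order, every monotone inflationary function has a fixed point. -/
theorem pataraia_fixed_point (X : Type*) [PartialOrder X] [Nonempty X]
    (hdc : ∀ D : Set X, D.Nonempty → DirectedOn (· ≤ ·) D → ∃ s, IsLUB D s)
    (f : X → X) (hmono : Monotone f) (hinfl : ∀ x, x ≤ f x) :
    ∃ x, f x = x :=
  pataraia_fixed_point_general X hdc f hinfl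
end

section
/- (Negation) Let (I, m, e₋, e₊) be an interval set, write o = m(e₋, e₊). Then there exists a unique function neg : I → I satisfying neg(e₊) = e₋, neg(e₋) = e₊, and neg(m(x,y)) = m(neg x, neg y) for all x, y ∈ I. Moreover this function satisfies neg(neg x) = x, neg(o) = o, and m(x, neg x) = o for all x ∈ I. -/
/-- Iterativity in the category of sets. -/
def Iterative {A : Type} (m : A → A → A) : Prop :=
  ∀ (X : Type) (c : X → A × X), ∃! u : X → A, ∀ x, u x = m (c x).1 (u (c x).2)

/-- The unfolding property of an infinitary operation `M` with respect to `m`. -/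
def Unfolding {A : Type} (m : A → A → A) (M : (ℕ → A) → A) : Prop :=
  ∀ x : ℕ → A, M x = m (x 0) (M fun i => x (i + 1))

/-- The canonicity property of an infinitary operation `M` with respect to `m`. -/
def Canonicity {A : Type} (m : A → A → A) (M : (ℕ → A) → A) : Prop :=
  ∀ x y : ℕ → A, (∀ i, y i = m (x i) (y (i + 1))) → y 0 = M x

/-- An interval set: a midpoint-convex body `(I, m)` with two points `em, ep`
that is initial among midpoint-convex bodies with two points. -/
def IsIntervalSet {I : Type} (m : I → I → I) (em ep : I) : Prop :=
  IsMidpoint m ∧ Cancellative m ∧ Iterative m ∧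
  ∀ (A : Type) (m' : A → A → A), IsMidpoint m' → Cancellative m' → Iterative m' →
    ∀ x y : A, ∃! h : I → A,
      (∀ u v, h (m u v) = m' (h u) (h v)) ∧ h em = x ∧ h ep = y

def IsMidpointHom {A B : Type} (m : A → A → A) (m' : B → B → B) (h : A → B) : Prop :=
  ∀ u v, h (m u v) = m' (h u) (h v)

namespace IsMidpointHom

variable {A B C : Type} {m : A → A → A} {m' : B → B → B} {m'' : C → C → C}

protected theorem id : IsMidpointHom m m fun x => x := fun _ _ => rfl

theorem comp {g : B → C} {f : A → B} (hg : IsMidpointHom m' m'' g) (hf : IsMidpointHom m m' f) :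
    IsMidpointHom m m'' (g ∘ f) := fun u v => by
  simp only [Function.comp_apply, hf u v, hg (f u) (f v)]

theorem const (hm' : IsMidpoint m') (c : B) : IsMidpointHom m m' fun _ => c :=
  fun _ _ => (hm'.1 c).symm

theorem mid (hm' : IsMidpoint m') {f g : A → B} (hf : IsMidpointHom m m' f)
    (hg : IsMidpointHom m m' g) : IsMidpointHom m m' fun x => m' (f x) (g x) := fun u v => by
  dsimp only
  rw [hf u v, hg u v, hm'.2.2]

end IsMidpointHom

namespace IsIntervalSet

variable {I A : Type} {m : I → I → I} {em ep : I} {m' : A → A → A}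

theorem hom_ext (hI : IsIntervalSet m em ep) (hm' : IsMidpoint m') (hc' : Cancellative m')
    (hit' : Iterative m') {h h' : I → A} (hh : IsMidpointHom m m' h)
    (hh' : IsMidpointHom m m' h') (hem : h em = h' em) (hep : h ep = h' ep) : h = h' :=
  (hI.2.2.2 A m' hm' hc' hit' (h' em) (h' ep)).unique ⟨hh, hem, hep⟩ ⟨hh', rfl, rfl⟩

theorem eq_id (hI : IsIntervalSet m em ep) {f : I → I} (hf : IsMidpointHom m m f)
    (hem : f em = em) (hep : f ep = ep) : f = fun x => x :=
  hI.hom_ext hI.1 hI.2.1 hI.2.2.1 hf IsMidpointHom.id hem hep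

theorem eq_const (hI : IsIntervalSet m em ep) (hm' : IsMidpoint m') (hc' : Cancellative m')
    (hit' : Iterative m') {f : I → A} (hf : IsMidpointHom m m' f) {c : A} (hem : f em = c)
    (hep : f ep = c) : f = fun _ => c :=
  hI.hom_ext hm' hc' hit' hf (IsMidpointHom.const hm' c) hem hep

end IsIntervalSet

/-- Negation on an interval set: there is a unique function swapping the
endpoints and preserving midpoints; it is involutive, fixes the midpoint `o`
of the endpoints, and satisfies `m(x, neg x) = o`. -/
theorem interval_negation (I : Type) (m : I → I → I) (em ep : I)
    (hI : IsIntervalSet m em ep) :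
    (∃! neg : I → I,
      neg ep = em ∧ neg em = ep ∧ ∀ x y, neg (m x y) = m (neg x) (neg y)) ∧
    ∀ neg : I → I,
      (neg ep = em ∧ neg em = ep ∧ ∀ x y, neg (m x y) = m (neg x) (neg y)) →
      (∀ x, neg (neg x) = x) ∧ neg (m em ep) = m em ep ∧
        ∀ x, m x (neg x) = m em ep := by
  have ⟨hmid, hcanc, hiter, huniv⟩ := hI
  refine ⟨?_, fun neg ⟨hep, hem, hneg⟩ => ?_⟩
  · obtain ⟨neg, ⟨hneg, hem, hep⟩, huniq⟩ := huniv I m hmid hcanc hiter ep em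
    exact ⟨neg, ⟨hep, hem, hneg⟩, fun g ⟨gep, gem, hg⟩ => huniq g ⟨hg, gem, gep⟩⟩
  have hinv : neg ∘ neg = fun x => x :=
    hI.eq_id (IsMidpointHom.comp hneg hneg) (by simp only [Function.comp_apply, hem, hep])
      (by simp only [Function.comp_apply, hem, hep])
  have hsum : (fun x => m x (neg x)) = fun _ => m em ep :=
    hI.eq_const hmid hcanc hiter (IsMidpointHom.id.mid hmid hneg) (by rw [hem])
      (by rw [hep, hmid.2.1])
  exact ⟨congrFun hinv, by rw [hneg, hem, hep, hmid.2.1], congrFun hsum⟩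
end
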